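/- Let W be a symmetric N×N real matrix with nonnegative entries, positive degrees d_j := Σ_i W_{ij}, D := diag(d_1,…,d_N), H := W·D⁻¹, and L̃ := D^{-1/2}(D−W)D^{-1/2}. Suppose L̃ has an orthonormal eigenbasis q_1,…,q_N with eigenvalues 0 = μ_1 < μ_2 ≤ … ≤ μ_N (so the eigenvalue 0 is simple), and set μ' := min{μ_2, 2−μ_N}. Let L₊ and L₋ be nonempty subsets of {1,…,N} with uniform seed vectors p₊ := v_{L₊} and p₋ := v_{L₋}. Then for every positive integer K, ‖H^K p₊ − H^K p₋‖ ≤ (√(d_max/(d_min₋|L₋|)) + √(d_max/(d_min₊|L₊|))) · e^{−K·μ'}, where d_max := max_i d_i, d_min₊ := min_{i∈L₊} d_i, and d_min₋ := min_{i∈L₋} d_i. -/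

import Mathlib

/-!
With `s = √d`, the random walk `H = W D⁻¹` is similar to `1 - L̃` through `diagonal s`, so
`H^K (p₊ - p₋) = diagonal s ((1 - L̃)^K x)` with `x = D^{-1/2} (p₊ - p₋)`. Both seeds have total
mass one, so `x ⊥ s`; and `L̃ s = 0` because the row sums of the symmetric `W` are the degrees.
As the eigenvalue `0` is simple, `s` is a multiple of `q 0`, so `x` has no component along `q 0`.
On every other eigenvector `|1 - μᵢ| ≤ 1 - μ' ≤ e^{-μ'}`, and the remaining factors are
`‖diagonal s‖ ≤ √d_max` and `‖D^{-1/2} p_±‖ ≤ (d_min± |L±|)^{-1/2}`.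
-/

open Matrix Finset

/-- Euclidean norm of a vector in ℝ^N. -/
noncomputable def eNorm {N : ℕ} (x : Fin N → ℝ) : ℝ := Real.sqrt (∑ i, x i ^ 2)

section EuclideanNorm

variable {n : ℕ}

lemma eNorm_nonneg (x : Fin n → ℝ) : 0 ≤ eNorm x := Real.sqrt_nonneg _

lemma eNorm_eq_sqrt_dotProduct (x : Fin n → ℝ) : eNorm x = √(x ⬝ᵥ x) := by
  simp only [eNorm, dotProduct, sq]

lemma eNorm_eq_norm_toLp (x : Fin n → ℝ) : eNorm x = ‖WithLp.toLp 2 x‖ := by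
  simp only [eNorm, EuclideanSpace.norm_eq, Real.norm_eq_abs, sq_abs]

lemma eNorm_sub_le (x y : Fin n → ℝ) : eNorm (x - y) ≤ eNorm x + eNorm y := by
  simpa only [eNorm_eq_norm_toLp, WithLp.toLp_sub] using norm_sub_le _ _

lemma eNorm_le_of_abs_le {x y : Fin n → ℝ} {c : ℝ} (hc : 0 ≤ c)
    (h : ∀ i, |x i| ≤ c * |y i|) : eNorm x ≤ c * eNorm y := by
  rw [eNorm, eNorm, ← Real.sqrt_sq hc, ← Real.sqrt_mul (sq_nonneg c), mul_sum]
  gcongr with i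
  rw [← sq_abs (x i), ← sq_abs (y i), ← mul_pow]
  exact pow_le_pow_left₀ (abs_nonneg _) (h i) 2

lemma eNorm_diagonal_mulVec_le {c : Fin n → ℝ} {C : ℝ} (hC : 0 ≤ C)
    (h : ∀ i, |c i| ≤ C) (y : Fin n → ℝ) : eNorm (diagonal c *ᵥ y) ≤ C * eNorm y :=
  eNorm_le_of_abs_le hC fun i => by
    rw [mulVec_diagonal, abs_mul]
    exact mul_le_mul_of_nonneg_right (h i) (abs_nonneg _)

lemma dotProduct_mulVec_mulVec_of_transpose_mul_self {M : Matrix (Fin n) (Fin n) ℝ}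
    (hM : Mᵀ * M = 1) (x y : Fin n → ℝ) : (M *ᵥ x) ⬝ᵥ (M *ᵥ y) = x ⬝ᵥ y := by
  rw [dotProduct_mulVec, ← mulVec_transpose, mulVec_mulVec, hM, one_mulVec]

lemma eNorm_mulVec_of_transpose_mul_self {M : Matrix (Fin n) (Fin n) ℝ}
    (hM : Mᵀ * M = 1) (x : Fin n → ℝ) : eNorm (M *ᵥ x) = eNorm x := by
  rw [eNorm_eq_sqrt_dotProduct, eNorm_eq_sqrt_dotProduct,
    dotProduct_mulVec_mulVec_of_transpose_mul_self hM]

end EuclideanNorm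

section OrthonormalEigenbasis

variable {n : ℕ} {q : Fin n → Fin n → ℝ} {A : Matrix (Fin n) (Fin n) ℝ} {μ : Fin n → ℝ}

lemma of_mulVec_apply (x : Fin n → ℝ) (i : Fin n) : (of q *ᵥ x) i = q i ⬝ᵥ x := rfl

lemma of_mul_transpose_of_eq_one (hq : ∀ i j, q i ⬝ᵥ q j = if i = j then 1 else 0) :
    of q * (of q)ᵀ = 1 := by
  ext i j
  rw [one_apply, ← hq i j]
  simp [mul_apply, dotProduct]

lemma transpose_of_mul_of_eq_one (hq : ∀ i j, q i ⬝ᵥ q j = if i = j then 1 else 0) :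
    (of q)ᵀ * of q = 1 :=
  mul_eq_one_comm.mp (of_mul_transpose_of_eq_one hq)

lemma semiconjBy_transpose_of_diagonal (heig : ∀ i, A *ᵥ q i = μ i • q i) :
    SemiconjBy (of q)ᵀ (diagonal μ) A := by
  rw [SemiconjBy]
  ext j i
  rw [mul_diagonal, mul_apply]
  simpa [mulVec, dotProduct, mul_comm] using (congrFun (heig i) j).symm

lemma pow_mulVec_eq_of_orthonormal_eigenbasis
    (hq : ∀ i j, q i ⬝ᵥ q j = if i = j then 1 else 0) (heig : ∀ i, A *ᵥ q i = μ i • q i)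
    (k : ℕ) (x : Fin n → ℝ) :
    A ^ k *ᵥ x = (of q)ᵀ *ᵥ (diagonal (μ ^ k) *ᵥ (of q *ᵥ x)) := by
  have h := (semiconjBy_transpose_of_diagonal heig).pow_right k
  rw [SemiconjBy, diagonal_pow] at h
  rw [mulVec_mulVec, h, ← mulVec_mulVec, mulVec_mulVec _ _ (of q), transpose_of_mul_of_eq_one hq,
    one_mulVec]

lemma eNorm_pow_mulVec_le_of_orthonormal_eigenbasis
    (hq : ∀ i j, q i ⬝ᵥ q j = if i = j then 1 else 0) (heig : ∀ i, A *ᵥ q i = μ i • q i)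
    {x : Fin n → ℝ} {c : ℝ} (hc : 0 ≤ c) (hx : ∀ i, q i ⬝ᵥ x ≠ 0 → |μ i| ≤ c) (k : ℕ) :
    eNorm (A ^ k *ᵥ x) ≤ c ^ k * eNorm x := by
  have hqt : (of q)ᵀᵀ * (of q)ᵀ = 1 := by
    rw [transpose_transpose, of_mul_transpose_of_eq_one hq]
  rw [pow_mulVec_eq_of_orthonormal_eigenbasis hq heig, eNorm_mulVec_of_transpose_mul_self hqt,
    ← eNorm_mulVec_of_transpose_mul_self (transpose_of_mul_of_eq_one hq) x]
  refine eNorm_le_of_abs_le (pow_nonneg hc k) fun i => ?_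
  rw [mulVec_diagonal, abs_mul, Pi.pow_apply, abs_pow]
  by_cases hi : q i ⬝ᵥ x = 0
  · simp [of_mulVec_apply, hi]
  · exact mul_le_mul_of_nonneg_right (pow_le_pow_left₀ (abs_nonneg _) (hx i hi) k) (abs_nonneg _)

lemma dotProduct_eq_zero_of_simple_eigenvalue
    (hq : ∀ i j, q i ⬝ᵥ q j = if i = j then 1 else 0) (heig : ∀ i, A *ᵥ q i = μ i • q i)
    {i₀ : Fin n} (hsimple : ∀ i, i ≠ i₀ → μ i ≠ 0) {v : Fin n → ℝ} (hv : A *ᵥ v = 0)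
    (hv0 : v ≠ 0) {x : Fin n → ℝ} (hx : v ⬝ᵥ x = 0) : q i₀ ⬝ᵥ x = 0 := by
  have hcoeff : ∀ i, i ≠ i₀ → q i ⬝ᵥ v = 0 := by
    intro i hi
    rw [← pow_one A, pow_mulVec_eq_of_orthonormal_eigenbasis hq heig] at hv
    have h := congrArg (of q *ᵥ ·) hv
    rw [mulVec_mulVec, of_mul_transpose_of_eq_one hq, one_mulVec, mulVec_zero] at h
    simpa [mulVec_diagonal, of_mulVec_apply, hsimple i hi] using congrFun h i
  have hcoeff₀ : q i₀ ⬝ᵥ v ≠ 0 := by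
    intro h0
    have hqv : of q *ᵥ v = 0 := funext fun i => by
      by_cases hi : i = i₀
      · exact hi ▸ h0
      · exact hcoeff i hi
    apply hv0
    rw [← one_mulVec v, ← transpose_of_mul_of_eq_one hq, ← mulVec_mulVec, hqv, mulVec_zero]
  have hexpand : v ⬝ᵥ x = (q i₀ ⬝ᵥ v) * (q i₀ ⬝ᵥ x) := by
    rw [← dotProduct_mulVec_mulVec_of_transpose_mul_self (transpose_of_mul_of_eq_one hq),
      dotProduct, Fintype.sum_eq_single i₀ fun i hi => by simp [of_mulVec_apply, hcoeff i hi]]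
    rfl
  rw [hx, eq_comm, mul_eq_zero] at hexpand
  exact hexpand.resolve_left hcoeff₀

end OrthonormalEigenbasis

lemma one_sub_pow_le_exp_neg_mul {x : ℝ} (hx : x ≤ 1) (k : ℕ) :
    (1 - x) ^ k ≤ Real.exp (-k * x) := by
  rw [neg_mul, ← mul_neg, Real.exp_nat_mul]
  exact pow_le_pow_left₀ (by linarith) (Real.one_sub_le_exp_neg x) k

lemma abs_one_sub_le_one_sub_min {N : ℕ} {μ : Fin (N + 2) → ℝ} (hmono : Monotone μ)
    {i : Fin (N + 2)} (hi : i ≠ 0) :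
    |1 - μ i| ≤ 1 - min (μ 1) (2 - μ (Fin.last (N + 1))) := by
  have h1 : μ 1 ≤ μ i := hmono (Fin.one_le_of_ne_zero hi)
  have hlast : μ i ≤ μ (Fin.last (N + 1)) := hmono (Fin.le_last i)
  rw [abs_le]
  constructor <;> linarith [min_le_left (μ 1) (2 - μ (Fin.last (N + 1))),
    min_le_right (μ 1) (2 - μ (Fin.last (N + 1)))]

lemma eNorm_pow_one_sub_mulVec_le_exp {N : ℕ} {A : Matrix (Fin (N + 2)) (Fin (N + 2)) ℝ}
    {q : Fin (N + 2) → Fin (N + 2) → ℝ} {μ : Fin (N + 2) → ℝ}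
    (hq : ∀ i j, q i ⬝ᵥ q j = if i = j then 1 else 0) (heig : ∀ i, A *ᵥ q i = μ i • q i)
    (hmono : Monotone μ) (hsimple : ∀ i, i ≠ 0 → 0 < μ i) {v x : Fin (N + 2) → ℝ}
    (hv : A *ᵥ v = 0) (hv0 : v ≠ 0) (hx : v ⬝ᵥ x = 0) (k : ℕ) :
    eNorm ((1 - A) ^ k *ᵥ x) ≤
      Real.exp (-k * min (μ 1) (2 - μ (Fin.last (N + 1)))) * eNorm x := by
  have hq0 : q 0 ⬝ᵥ x = 0 :=
    dotProduct_eq_zero_of_simple_eigenvalue hq heig (fun i hi => (hsimple i hi).ne') hv hv0 hx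
  have hgap : ∀ i, q i ⬝ᵥ x ≠ 0 → |1 - μ i| ≤ 1 - min (μ 1) (2 - μ (Fin.last (N + 1))) :=
    fun i hi => abs_one_sub_le_one_sub_min hmono (by rintro rfl; exact hi hq0)
  have hgap_le_one : min (μ 1) (2 - μ (Fin.last (N + 1))) ≤ 1 := by
    linarith [abs_nonneg (1 - μ 1), abs_one_sub_le_one_sub_min hmono (i := 1) one_ne_zero]
  have heig' : ∀ i, (1 - A) *ᵥ q i = (1 - μ i) • q i := fun i => by
    rw [sub_mulVec, one_mulVec, heig, sub_smul, one_smul]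
  calc _ ≤ (1 - min (μ 1) (2 - μ (Fin.last (N + 1)))) ^ k * eNorm x :=
        eNorm_pow_mulVec_le_of_orthonormal_eigenbasis hq heig' (by linarith) hgap k
    _ ≤ _ := mul_le_mul_of_nonneg_right (one_sub_pow_le_exp_neg_mul hgap_le_one k) (eNorm_nonneg x)

section NormalizedLaplacian

variable {n : ℕ} {W : Matrix (Fin n) (Fin n) ℝ} {d : Fin n → ℝ}

noncomputable def normalizedLaplacian (W : Matrix (Fin n) (Fin n) ℝ) (d : Fin n → ℝ) :
    Matrix (Fin n) (Fin n) ℝ :=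
  diagonal (fun j => (√(d j))⁻¹) * (diagonal d - W) * diagonal (fun j => (√(d j))⁻¹)

lemma sqrt_dotProduct_diagonal_inv_sqrt_mulVec (hdpos : ∀ j, 0 < d j) (y : Fin n → ℝ) :
    (fun j => √(d j)) ⬝ᵥ (diagonal (fun j => (√(d j))⁻¹) *ᵥ y) = ∑ j, y j := by
  simp only [dotProduct, mulVec_diagonal]
  exact sum_congr rfl fun j _ => by
    rw [← mul_assoc, mul_inv_cancel₀ (Real.sqrt_pos.2 (hdpos j)).ne', one_mul]

lemma normalizedLaplacian_mulVec_sqrt (hsym : W.IsSymm) (hd : ∀ j, d j = ∑ i, W i j)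
    (hdpos : ∀ j, 0 < d j) : normalizedLaplacian W d *ᵥ (fun j => √(d j)) = 0 := by
  have hone : diagonal (fun j => (√(d j))⁻¹) *ᵥ (fun j => √(d j)) = fun _ => 1 := by
    ext j
    rw [mulVec_diagonal, inv_mul_cancel₀ (Real.sqrt_pos.2 (hdpos j)).ne']
  have hrowsum : W *ᵥ (fun _ => 1) = d := by
    ext i
    simp only [mulVec, dotProduct, mul_one, hd i, ← hsym.apply i]
  rw [normalizedLaplacian, ← mulVec_mulVec, hone, ← mulVec_mulVec, sub_mulVec, hrowsum]
  ext i
  simp [mulVec_diagonal]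

lemma diagonal_sqrt_mul_diagonal_inv_sqrt (hdpos : ∀ j, 0 < d j) :
    (diagonal fun j => √(d j)) * diagonal (fun j => (√(d j))⁻¹) = 1 := by
  rw [diagonal_mul_diagonal, ← diagonal_one]
  exact congrArg diagonal (funext fun j => mul_inv_cancel₀ (Real.sqrt_pos.2 (hdpos j)).ne')

lemma semiconjBy_diagonal_sqrt (hdpos : ∀ j, 0 < d j) :
    SemiconjBy (diagonal fun j => √(d j)) (1 - normalizedLaplacian W d)
      (W * diagonal fun j => (d j)⁻¹) := by
  have hs : ∀ j, √(d j) ≠ 0 := fun j => (Real.sqrt_pos.2 (hdpos j)).ne'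
  have hsq : ∀ j, √(d j) * √(d j) = d j := fun j => Real.mul_self_sqrt (hdpos j).le
  have h2 : diagonal d * diagonal (fun j => (√(d j))⁻¹) = diagonal fun j => √(d j) := by
    rw [diagonal_mul_diagonal]
    exact congrArg diagonal (funext fun j => by
      nth_rw 1 [← hsq j]; rw [mul_inv_cancel_right₀ (hs j)])
  have h3 : diagonal (fun j => (d j)⁻¹) * (diagonal fun j => √(d j)) =
      diagonal fun j => (√(d j))⁻¹ := by
    rw [diagonal_mul_diagonal]
    exact congrArg diagonal (funext fun j => by
      nth_rw 1 [← hsq j]; rw [mul_inv, inv_mul_cancel_right₀ (hs j)])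
  rw [SemiconjBy, normalizedLaplacian, mul_sub, mul_one, ← mul_assoc, ← mul_assoc,
    diagonal_sqrt_mul_diagonal_inv_sqrt hdpos, one_mul,
    sub_mul, h2, mul_assoc, h3]
  abel

lemma pow_mulVec_eq_diagonal_sqrt_mulVec (hdpos : ∀ j, 0 < d j) (k : ℕ) (y : Fin n → ℝ) :
    (W * diagonal fun j => (d j)⁻¹) ^ k *ᵥ y = (diagonal fun j => √(d j)) *ᵥ
      ((1 - normalizedLaplacian W d) ^ k *ᵥ (diagonal (fun j => (√(d j))⁻¹) *ᵥ y)) := by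
  have h := ((semiconjBy_diagonal_sqrt (W := W) hdpos).pow_right k).eq
  rw [mulVec_mulVec, h, mulVec_mulVec, mul_assoc, diagonal_sqrt_mul_diagonal_inv_sqrt hdpos,
    mul_one]

end NormalizedLaplacian

section SeedVector

variable {n : ℕ}

noncomputable def seedVector (L : Finset (Fin n)) : Fin n → ℝ :=
  fun i => if i ∈ L then ((#L : ℝ))⁻¹ else 0

lemma sum_seedVector {L : Finset (Fin n)} (hL : L.Nonempty) : ∑ i, seedVector L i = 1 := by
  simp [seedVector, sum_ite_mem, hL.card_ne_zero]

lemma eNorm_seedVector (L : Finset (Fin n)) : eNorm (seedVector L) = √((#L : ℝ)⁻¹) := by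
  rw [eNorm]
  congr 1
  simp only [seedVector, ite_pow, zero_pow two_ne_zero, sum_ite_mem, univ_inter, sum_const,
    nsmul_eq_mul]
  rcases eq_or_ne (#L : ℝ) 0 with h | h
  · simp [h]
  · field_simp

lemma eNorm_diagonal_inv_sqrt_mulVec_seedVector_le {d : Fin n → ℝ} (hdpos : ∀ j, 0 < d j)
    {L : Finset (Fin n)} (hL : L.Nonempty) :
    eNorm (diagonal (fun j => (√(d j))⁻¹) *ᵥ seedVector L) ≤ √((L.inf' hL d * #L)⁻¹) := by
  have hmin : 0 < L.inf' hL d := by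
    obtain ⟨j, -, hj⟩ := L.exists_mem_eq_inf' hL d
    exact hj ▸ hdpos j
  rw [mul_inv, Real.sqrt_mul (inv_nonneg.2 hmin.le), Real.sqrt_inv, ← eNorm_seedVector]
  refine eNorm_le_of_abs_le (by positivity) fun j => ?_
  rw [mulVec_diagonal, abs_mul]
  by_cases hj : j ∈ L
  · refine mul_le_mul_of_nonneg_right ?_ (abs_nonneg _)
    rw [abs_of_pos (inv_pos.2 (Real.sqrt_pos.2 (hdpos j)))]
    exact inv_anti₀ (Real.sqrt_pos.2 hmin) (Real.sqrt_le_sqrt (L.inf'_le d hj))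
  · simp [seedVector, hj]

end SeedVector

theorem seed_diffusion_spectral_gap_bound_general
    (N : ℕ) (W : Matrix (Fin (N + 2)) (Fin (N + 2)) ℝ)
    (hsym : W.IsSymm)
    (d : Fin (N + 2) → ℝ) (hd : ∀ j, d j = ∑ i, W i j)
    (hdpos : ∀ j, 0 < d j)
    (H : Matrix (Fin (N + 2)) (Fin (N + 2)) ℝ)
    (hH : H = W * Matrix.diagonal (fun j => (d j)⁻¹))
    (Ltil : Matrix (Fin (N + 2)) (Fin (N + 2)) ℝ)
    (hLtil : Ltil = Matrix.diagonal (fun j => (Real.sqrt (d j))⁻¹) *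
      (Matrix.diagonal d - W) * Matrix.diagonal (fun j => (Real.sqrt (d j))⁻¹))
    -- orthonormal eigenbasis of L̃ with ordered eigenvalues, 0 simple
    (q : Fin (N + 2) → (Fin (N + 2) → ℝ)) (μ : Fin (N + 2) → ℝ)
    (horth : ∀ i j, q i ⬝ᵥ q j = if i = j then 1 else 0)
    (heig : ∀ i, Ltil.mulVec (q i) = μ i • q i)
    (hmono : Monotone μ) (hsimple : ∀ i, i ≠ 0 → 0 < μ i)
    (μ' : ℝ) (hμ' : μ' = min (μ 1) (2 - μ (Fin.last (N + 1))))
    (dmax : ℝ) (hdmax : dmax = Finset.univ.sup' Finset.univ_nonempty d)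
    (Lp Lm : Finset (Fin (N + 2))) (hLp : Lp.Nonempty) (hLm : Lm.Nonempty)
    (pp pm : Fin (N + 2) → ℝ)
    (hpp : ∀ i, pp i = if i ∈ Lp then ((Lp.card : ℝ))⁻¹ else 0)
    (hpm : ∀ i, pm i = if i ∈ Lm then ((Lm.card : ℝ))⁻¹ else 0)
    (dminp dminm : ℝ) (hdminp : dminp = Lp.inf' hLp d) (hdminm : dminm = Lm.inf' hLm d)
    (K : ℕ) :
    eNorm ((H ^ K).mulVec pp - (H ^ K).mulVec pm) ≤
      (Real.sqrt (dmax / (dminm * (Lm.card : ℝ))) +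
        Real.sqrt (dmax / (dminp * (Lp.card : ℝ)))) * Real.exp (-(K : ℝ) * μ') := by
  obtain rfl : pp = seedVector Lp := funext hpp
  obtain rfl : pm = seedVector Lm := funext hpm
  rw [← normalizedLaplacian] at hLtil
  subst hH hLtil hdminp hdminm
  set x := diagonal (fun j => (√(d j))⁻¹) *ᵥ (seedVector Lp - seedVector Lm) with hx
  have hx_perp : (fun j => √(d j)) ⬝ᵥ x = 0 := by
    rw [sqrt_dotProduct_diagonal_inv_sqrt_mulVec hdpos]
    simp only [Pi.sub_apply, sum_sub_distrib, sum_seedVector hLp, sum_seedVector hLm, sub_self]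
  have hcontract : eNorm ((1 - normalizedLaplacian W d) ^ K *ᵥ x) ≤
      Real.exp (-(K : ℝ) * μ') * eNorm x :=
    hμ' ▸ eNorm_pow_one_sub_mulVec_le_exp horth heig hmono hsimple
      (normalizedLaplacian_mulVec_sqrt hsym hd hdpos)
      (fun h => (Real.sqrt_pos.2 (hdpos 0)).ne' (congrFun h 0)) hx_perp K
  have hx_le : eNorm x ≤ √((Lp.inf' hLp d * #Lp)⁻¹) + √((Lm.inf' hLm d * #Lm)⁻¹) := by
    rw [hx, mulVec_sub]
    exact (eNorm_sub_le _ _).trans (add_le_add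
      (eNorm_diagonal_inv_sqrt_mulVec_seedVector_le hdpos hLp)
      (eNorm_diagonal_inv_sqrt_mulVec_seedVector_le hdpos hLm))
  have hdmax_nonneg : 0 ≤ dmax := hdmax ▸ (hdpos 0).le.trans (le_sup' d (mem_univ 0))
  have hsqrt_le : ∀ i, |√(d i)| ≤ √dmax := fun i => by
    rw [abs_of_nonneg (Real.sqrt_nonneg _), hdmax]
    exact Real.sqrt_le_sqrt (le_sup' d (mem_univ i))
  rw [← mulVec_sub, pow_mulVec_eq_diagonal_sqrt_mulVec hdpos]
  calc _ ≤ √dmax * eNorm ((1 - normalizedLaplacian W d) ^ K *ᵥ x) :=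
        eNorm_diagonal_mulVec_le (Real.sqrt_nonneg _) hsqrt_le _
    _ ≤ √dmax * (Real.exp (-(K : ℝ) * μ') *
          (√((Lp.inf' hLp d * #Lp)⁻¹) + √((Lm.inf' hLm d * #Lm)⁻¹))) := by
        gcongr
        exact hcontract.trans (mul_le_mul_of_nonneg_left hx_le (Real.exp_pos _).le)
    _ = _ := by
        rw [div_eq_mul_inv, div_eq_mul_inv, Real.sqrt_mul hdmax_nonneg, Real.sqrt_mul hdmax_nonneg]
        ring

/-- spectral-gap bound on the distance between the K-step
diffusions of two seed vectors:
‖H^K p₊ − H^K p₋‖ ≤ (√(d_max/(d_min₋|L₋|)) + √(d_max/(d_min₊|L₊|)))·e^{−Kμ'}.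
(N ≥ 2 is encoded by using matrices of size N+2.) -/
theorem seed_diffusion_spectral_gap_bound
    (N : ℕ) (W : Matrix (Fin (N + 2)) (Fin (N + 2)) ℝ)
    (hsym : W.IsSymm) (hnn : ∀ i j, 0 ≤ W i j)
    (d : Fin (N + 2) → ℝ) (hd : ∀ j, d j = ∑ i, W i j)
    (hdpos : ∀ j, 0 < d j)
    (H : Matrix (Fin (N + 2)) (Fin (N + 2)) ℝ)
    (hH : H = W * Matrix.diagonal (fun j => (d j)⁻¹))
    (Ltil : Matrix (Fin (N + 2)) (Fin (N + 2)) ℝ)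
    (hLtil : Ltil = Matrix.diagonal (fun j => (Real.sqrt (d j))⁻¹) *
      (Matrix.diagonal d - W) * Matrix.diagonal (fun j => (Real.sqrt (d j))⁻¹))
    -- orthonormal eigenbasis of L̃ with ordered eigenvalues, 0 simple
    (q : Fin (N + 2) → (Fin (N + 2) → ℝ)) (μ : Fin (N + 2) → ℝ)
    (horth : ∀ i j, q i ⬝ᵥ q j = if i = j then 1 else 0)
    (heig : ∀ i, Ltil.mulVec (q i) = μ i • q i)
    (hmono : Monotone μ) (hμ0 : μ 0 = 0) (hsimple : ∀ i, i ≠ 0 → 0 < μ i)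
    (μ' : ℝ) (hμ' : μ' = min (μ 1) (2 - μ (Fin.last (N + 1))))
    (dmax : ℝ) (hdmax : dmax = Finset.univ.sup' Finset.univ_nonempty d)
    (Lp Lm : Finset (Fin (N + 2))) (hLp : Lp.Nonempty) (hLm : Lm.Nonempty)
    (pp pm : Fin (N + 2) → ℝ)
    (hpp : ∀ i, pp i = if i ∈ Lp then ((Lp.card : ℝ))⁻¹ else 0)
    (hpm : ∀ i, pm i = if i ∈ Lm then ((Lm.card : ℝ))⁻¹ else 0)
    (dminp dminm : ℝ) (hdminp : dminp = Lp.inf' hLp d) (hdminm : dminm = Lm.inf' hLm d)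
    (K : ℕ) (hK : 1 ≤ K) :
    eNorm ((H ^ K).mulVec pp - (H ^ K).mulVec pm) ≤
      (Real.sqrt (dmax / (dminm * (Lm.card : ℝ))) +
        Real.sqrt (dmax / (dminp * (Lp.card : ℝ)))) * Real.exp (-(K : ℝ) * μ') :=
  seed_diffusion_spectral_gap_bound_general N W hsym d hd hdpos H hH Ltil hLtil q μ horth heig hmono
    hsimple μ' hμ' dmax hdmax Lp Lm hLp hLm pp pm hpp hpm dminp dminm hdminp hdminm K
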